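/- arXiv:1705.03118 — 4 statements merged into one kernel-verified Lean document; each statement's English description precedes it below -/
import Mathlib

section
/- For all nonnegative integers m and n, the scalar product ⟨z^m, z^n⟩ := ∫_{ℝ³} conj(z)^m z^n dμ(z), where z ranges over pure quaternions identified with ℝ³ and μ is the standard Gaussian measure, equals (-1)^{(n-m)/2} (m+n+1)!! if n - m is even, and 0 if n - m is odd. -/
open MeasureTheory Real Quaternion

noncomputable def pureQ (x : Fin 3 → ℝ) : ℍ[ℝ] := ⟨0, x 0, x 1, x 2⟩

noncomputable def gaussDens (x : Fin 3 → ℝ) : ℝ :=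
  (2 * π) ^ (-(3 : ℝ) / 2) * Real.exp (-(x 0 ^ 2 + x 1 ^ 2 + x 2 ^ 2) / 2)

/-- Scalar product of the monomials `z^m` and `z^n` over pure quaternions with
respect to the standard Gaussian measure on `ℝ³`. -/
noncomputable def monomialSP (m n : ℕ) : ℍ[ℝ] :=
  ∫ x : Fin 3 → ℝ, gaussDens x • (star (pureQ x) ^ m * pureQ x ^ n)

/-!
For a pure quaternion `z` we have `conj z = -z` and `z ^ 2 = -|z| ^ 2`, so
`conj(z) ^ m * z ^ n = (-1) ^ m * z ^ (m + n)`. If `m + n` is odd this is an odd function of `z`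
integrated against an even density, hence the integral vanishes. If `m + n = 2 s` it is the real
number `(-1) ^ (m + s) * |z| ^ (2 s)`, and in polar coordinates the Gaussian moment is
`E |z| ^ (2 s) = 2 ^ s Γ(s + 3/2) / Γ(3/2) = (2 s + 1)‼`.
-/

open Set Module
open scoped Nat

theorem integral_Ioi_rpow_mul_exp_neg_sq_div_two {q : ℝ} (hq : -1 < q) :
    ∫ y in Ioi (0 : ℝ), y ^ q * exp (-y ^ 2 / 2) = 2 ^ ((q - 1) / 2) * Gamma ((q + 1) / 2) := by
  have h := integral_rpow_mul_exp_neg_mul_rpow two_pos hq (one_half_pos (α := ℝ))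
  have hc : ((1 : ℝ) / 2) ^ (-(q + 1) / 2) * (1 / 2) = 2 ^ ((q - 1) / 2) := by
    rw [one_div, inv_rpow zero_le_two, ← rpow_neg zero_le_two, ← rpow_neg_one 2,
      ← rpow_add two_pos]
    ring_nf
  simp only [rpow_two, hc] at h
  rw [← h]
  congr! 4 with y
  ring

theorem integral_rpow_norm_mul_exp_neg_sq_norm_div_two {E : Type*} [NormedAddCommGroup E]
    [NormedSpace ℝ E] [FiniteDimensional ℝ E] [Nontrivial E] [MeasurableSpace E] [BorelSpace E]
    (μ : Measure E) [μ.IsAddHaarMeasure] {p : ℝ} (hp : -(finrank ℝ E : ℝ) < p) :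
    ∫ x, ‖x‖ ^ p * exp (-‖x‖ ^ 2 / 2) ∂μ =
      2 ^ (p / 2) * Gamma ((p + finrank ℝ E) / 2) / Gamma (finrank ℝ E / 2) *
        ∫ x, exp (-‖x‖ ^ 2 / 2) ∂μ := by
  set d : ℝ := (finrank ℝ E : ℝ) with hd_def
  have hd : 1 ≤ d := by rw [hd_def]; exact_mod_cast finrank_pos
  -- In polar coordinates both sides are Gamma integrals with the same factor `d • μ (ball 0 1)`.
  have radial : ∀ q : ℝ, -d < q → ∫ x, ‖x‖ ^ q * exp (-‖x‖ ^ 2 / 2) ∂μ =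
      finrank ℝ E • μ.real (Metric.ball 0 1) •
        (2 ^ ((q + d - 2) / 2) * Gamma ((q + d) / 2)) := by
    intro q hq
    have hpolar : ∫ y in Ioi (0 : ℝ), y ^ (finrank ℝ E - 1) • (y ^ q * exp (-y ^ 2 / 2)) =
        ∫ y in Ioi (0 : ℝ), y ^ (q + (d - 1)) * exp (-y ^ 2 / 2) := by
      refine setIntegral_congr_fun measurableSet_Ioi fun y (hy : 0 < y) => ?_
      rw [smul_eq_mul, ← mul_assoc, ← rpow_natCast, Nat.cast_sub finrank_pos, ← rpow_add hy,
        add_comm q, Nat.cast_one]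
    rw [integral_fun_norm_addHaar μ (fun y => y ^ q * exp (-y ^ 2 / 2)), hpolar,
      integral_Ioi_rpow_mul_exp_neg_sq_div_two (by linarith)]
    ring_nf
  have h0 := radial 0 (by linarith)
  simp only [rpow_zero, one_mul, zero_add] at h0
  rw [radial p hp, h0]
  have hΓ : Gamma (d / 2) ≠ 0 := (Gamma_pos_of_pos (by positivity)).ne'
  have h2 : (2 : ℝ) ^ ((p + d - 2) / 2) = 2 ^ (p / 2) * 2 ^ ((d - 2) / 2) := by
    rw [← rpow_add two_pos]; ring_nf
  simp only [nsmul_eq_mul, smul_eq_mul, h2]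
  field_simp

theorem integral_gaussian_moment_rpow_norm {E : Type*}
    [NormedAddCommGroup E] [InnerProductSpace ℝ E] [FiniteDimensional ℝ E] [Nontrivial E]
    [MeasurableSpace E] [BorelSpace E] {p : ℝ} (hp : -(finrank ℝ E : ℝ) < p) :
    ∫ x : E, (2 * π) ^ (-(finrank ℝ E : ℝ) / 2) * (‖x‖ ^ p * exp (-‖x‖ ^ 2 / 2)) =
      2 ^ (p / 2) * Gamma ((p + finrank ℝ E) / 2) / Gamma (finrank ℝ E / 2) := by
  have hmass : ∫ x : E, exp (-‖x‖ ^ 2 / 2) = (2 * π) ^ ((finrank ℝ E : ℝ) / 2) := by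
    have := GaussianFourier.integral_rexp_neg_mul_sq_norm (V := E) one_half_pos
    rw [div_div_eq_mul_div, div_one, mul_comm] at this
    simpa only [neg_mul, one_div, ← div_eq_inv_mul, neg_div] using this
  rw [integral_const_mul, integral_rpow_norm_mul_exp_neg_sq_norm_div_two _ hp, hmass,
    mul_comm, mul_assoc, ← rpow_add (by positivity), neg_div, add_neg_cancel, rpow_zero, mul_one]

theorem integral_odd_eq_zero {G F : Type*} [AddGroup G] [MeasurableSpace G] [MeasurableNeg G]
    [NormedAddCommGroup F] [NormedSpace ℝ F] {μ : Measure G} [μ.IsNegInvariant] {f : G → F}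
    (hf : ∀ x, f (-x) = -f x) : ∫ x, f x ∂μ = 0 := by
  have : IsAddTorsionFree F := .of_isTorsionFree ℝ F
  simp_rw [← self_eq_neg, ← integral_neg, ← hf, integral_neg_eq_self]

theorem two_pow_mul_Gamma_add_three_halves_div (s : ℕ) :
    2 ^ s * Gamma (s + 3 / 2) / Gamma (3 / 2) = (2 * s + 1)‼ := by
  have hs := Gamma_nat_add_one_add_half s
  have h0 : Gamma (1 + 1 / 2) = √π / 2 := by simpa using Gamma_nat_add_one_add_half 0
  rw [show (s : ℝ) + 3 / 2 = s + 1 + 1 / 2 by ring, show (3 : ℝ) / 2 = 1 + 1 / 2 by norm_num,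
    hs, h0, pow_succ]
  have : 0 < √π := sqrt_pos.mpr pi_pos
  field_simp

theorem norm_toLp_sq_fin_three (x : Fin 3 → ℝ) :
    ‖WithLp.toLp 2 x‖ ^ 2 = x 0 ^ 2 + x 1 ^ 2 + x 2 ^ 2 := by
  simp [EuclideanSpace.real_norm_sq_eq, Fin.sum_univ_three]

theorem integral_gaussDens_mul_pow (s : ℕ) :
    ∫ x, gaussDens x * (x 0 ^ 2 + x 1 ^ 2 + x 2 ^ 2) ^ s = (2 * s + 1)‼ := by
  have hE : finrank ℝ (EuclideanSpace ℝ (Fin 3)) = 3 := finrank_euclideanSpace_fin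
  have h := integral_gaussian_moment_rpow_norm
    (E := EuclideanSpace ℝ (Fin 3)) (p := 2 * s)
    (by rw [hE]; push_cast; linarith [(s.cast_nonneg : (0 : ℝ) ≤ s)])
  rw [← (PiLp.volume_preserving_toLp (Fin 3)).integral_comp
    (MeasurableEquiv.toLp 2 _).measurableEmbedding] at h
  have hpow : ∀ y : ℝ, y ^ (2 * s : ℝ) = (y ^ 2) ^ s := fun y => by
    rw [← pow_mul, ← rpow_natCast]; push_cast; rfl
  simp only [hE, hpow, norm_toLp_sq_fin_three, Nat.cast_ofNat] at h
  rw [← two_pow_mul_Gamma_add_three_halves_div]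
  convert h using 1
  · congr 1 with x
    rw [gaussDens]
    ring
  · rw [show (2 : ℝ) * s / 2 = s by ring, rpow_natCast,
      show (2 * s + 3 : ℝ) / 2 = s + 3 / 2 by ring]

theorem star_pureQ (x : Fin 3 → ℝ) : star (pureQ x) = -pureQ x := Quaternion.star_eq_neg.mpr rfl

theorem normSq_pureQ (x : Fin 3 → ℝ) : normSq (pureQ x) = x 0 ^ 2 + x 1 ^ 2 + x 2 ^ 2 := by
  rw [normSq_def', pureQ]
  ring

theorem pureQ_sq (x : Fin 3 → ℝ) :
    pureQ x ^ 2 = algebraMap ℝ ℍ[ℝ] (-(x 0 ^ 2 + x 1 ^ 2 + x 2 ^ 2)) := by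
  rw [← normSq_pureQ, map_neg]
  exact sq_eq_neg_normSq.mpr rfl

theorem pureQ_neg (x : Fin 3 → ℝ) : pureQ (-x) = -pureQ x := by
  ext <;> simp only [re_neg, imI_neg, imJ_neg, imK_neg] <;> simp [pureQ]

theorem gaussDens_neg (x : Fin 3 → ℝ) : gaussDens (-x) = gaussDens x := by
  simp [gaussDens]

theorem star_pureQ_pow_mul_pureQ_pow (x : Fin 3 → ℝ) (m n : ℕ) :
    star (pureQ x) ^ m * pureQ x ^ n = (-1) ^ m * pureQ x ^ (m + n) := by
  rw [star_pureQ, neg_pow, mul_assoc, pow_add]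

theorem monomialSP_of_add_eq_two_mul {m n s : ℕ} (h : m + n = 2 * s) :
    monomialSP m n = algebraMap ℝ ℍ[ℝ] ((-1) ^ (m + s) * (2 * s + 1)‼) := by
  have hintegrand : ∀ x, gaussDens x • (star (pureQ x) ^ m * pureQ x ^ n) =
      ((-1) ^ (m + s) * (gaussDens x * (x 0 ^ 2 + x 1 ^ 2 + x 2 ^ 2) ^ s)) • (1 : ℍ[ℝ]) := by
    intro x
    rw [star_pureQ_pow_mul_pureQ_pow, h, pow_mul, pureQ_sq, ← map_pow,
      show (-1 : ℍ[ℝ]) ^ m = algebraMap ℝ ℍ[ℝ] ((-1) ^ m) by simp, ← map_mul,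
      Algebra.algebraMap_eq_smul_one, smul_smul, neg_pow (x 0 ^ 2 + x 1 ^ 2 + x 2 ^ 2), pow_add]
    congr 1
    ring
  simp_rw [monomialSP, hintegrand, integral_smul_const, integral_const_mul, integral_gaussDens_mul_pow,
    Algebra.algebraMap_eq_smul_one]

theorem monomialSP_of_odd_add {m n : ℕ} (h : Odd (m + n)) : monomialSP m n = 0 :=
  integral_odd_eq_zero fun x => by
    rw [gaussDens_neg, star_pureQ_pow_mul_pureQ_pow (-x), star_pureQ_pow_mul_pureQ_pow x,
      pureQ_neg, h.neg_pow, mul_neg, smul_neg]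

theorem stmt3 (m n : ℕ) :
    (∀ r : ℤ, (n : ℤ) - m = 2 * r →
      monomialSP m n =
        algebraMap ℝ ℍ[ℝ] ((-1 : ℝ) ^ r * (Nat.doubleFactorial (m + n + 1) : ℝ))) ∧
    (Odd ((n : ℤ) - m) → monomialSP m n = 0) := by
  refine ⟨fun r hr => ?_, fun hodd => monomialSP_of_odd_add ?_⟩
  · obtain ⟨s, hs⟩ : ∃ s, m + n = 2 * s := ⟨(m + n) / 2, by omega⟩
    have hsign : ((m + s : ℕ) : ℤ) = r + 2 * m := by omega
    rw [monomialSP_of_add_eq_two_mul hs, hs, ← zpow_natCast, hsign, zpow_add₀ (by norm_num),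
      zpow_mul]
    simp
  · have : ((m + n : ℕ) : ℤ) = (n - m) + 2 * m := by push_cast; ring
    rw [← Int.odd_coe_nat, this]
    exact hodd.add_even (even_two_mul _)
end

section
/- With P_n defined by the recursion P₀ = 1, P₁(z) = z, P_{n+1}(z) = z P_n(z) + β_n P_{n-1}(z), where β_n = n + 2 for odd n and β_n = n for even n, the squared norm h_n := ⟨P_n, P_n⟩ = ∫_{ℝ³} conj(P_n(z)) P_n(z) dμ(z) equals n!·(n+2) if n is odd and (n+1)! if n is even. -/
open MeasureTheory Real Quaternion Polynomial

noncomputable def β (n : ℕ) : ℝ := if Odd n then n + 2 else n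

noncomputable def P : ℕ → Polynomial ℝ
  | 0 => 1
  | 1 => X
  | (n + 2) => X * P (n + 1) + C (β (n + 1)) * P n

/-!
Write a pure quaternion as `z = r • u` with `r = ‖z‖` and `u * u = -1`. The recursion for `P`
then gives `P n (z) = Q n (r) • uⁿ`, where `Q` obeys the recursion of `P` with `β` replaced by
`-β`, so `conj (P n z) * P n z = Q n (r) ^ 2`. Integrating a radial function against the Gaussian
on `ℝ³` turns this into `E[Z² Q n (Z)²]` for a standard normal `Z`. Finally `Z Q (2k) = He (2k+1)`
and `Z² Q (2k+1) = He (2k+3) + (2k+3) He (2k+1)` in terms of the Hermite polynomials `He`, and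
the Gaussian integration by parts `E[Z p(Z)] = E[p'(Z)]` gives `E[He m (Z) q(Z)] = m! · coeff q m`
whenever `deg q ≤ m`.
-/

open Set

noncomputable def Q : ℕ → ℝ[X]
  | 0 => 1
  | 1 => X
  | n + 2 => X * Q (n + 1) - C (β (n + 1)) * Q n

lemma eval_neg_Q : ∀ (n : ℕ) (r : ℝ), (Q n).eval (-r) = (-1) ^ n * (Q n).eval r
  | 0, r => by simp [Q]
  | 1, r => by simp [Q]
  | n + 2, r => by
    simp only [Q, eval_sub, eval_mul, eval_X, eval_C, eval_neg_Q (n + 1), eval_neg_Q n]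
    ring

lemma aeval_smul_P {A : Type*} [Ring A] [Algebra ℝ A] {u : A} (hu : u * u = -1) (r : ℝ) :
    ∀ n, aeval (r • u) (P n) = (Q n).eval r • u ^ n
  | 0 => by simp [P, Q]
  | 1 => by simp [P, Q]
  | n + 2 => by
    have hpow : u ^ (n + 2) = -u ^ n := by rw [pow_add, sq, hu, mul_neg_one]
    rw [P, Q, map_add, map_mul, map_mul, aeval_X, aeval_C, aeval_smul_P hu r (n + 1),
      aeval_smul_P hu r n, ← Algebra.smul_def, smul_mul_smul_comm, ← pow_succ', hpow]
    simp only [eval_sub, eval_mul, eval_X, eval_C]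
    module

lemma exists_eq_norm_smul_of_re_eq_zero {q : ℍ[ℝ]} (hq : q.re = 0) :
    ∃ u : ℍ[ℝ], u.re = 0 ∧ normSq u = 1 ∧ q = ‖q‖ • u := by
  rcases eq_or_ne q 0 with rfl | hq₀
  · refine ⟨pureQ ![1, 0, 0], rfl, ?_, by rw [norm_zero, zero_smul]⟩
    rw [normSq_def']
    simp [pureQ]
  · have hn : ‖q‖ ≠ 0 := norm_ne_zero_iff.mpr hq₀
    refine ⟨‖q‖⁻¹ • q, by simp [hq], ?_, by rw [smul_inv_smul₀ hn]⟩
    rw [normSq_smul, normSq_eq_norm_mul_self]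
    field_simp

lemma mul_self_eq_neg_normSq {u : ℍ[ℝ]} (hu : u.re = 0) : u * u = -((normSq u : ℝ) : ℍ[ℝ]) := by
  rw [← self_mul_star, star_eq_neg.mpr hu, mul_neg, neg_neg]

lemma star_mul_self_aeval_P {q : ℍ[ℝ]} (hq : q.re = 0) (n : ℕ) :
    star (aeval q (P n)) * aeval q (P n) = algebraMap ℝ ℍ[ℝ] ((Q n).eval ‖q‖ ^ 2) := by
  obtain ⟨u, hu_re, hu_normSq, hqu⟩ := exists_eq_norm_smul_of_re_eq_zero hq
  have hu : u * u = -1 := by rw [mul_self_eq_neg_normSq hu_re, hu_normSq, Quaternion.coe_one]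
  conv_lhs => rw [hqu, aeval_smul_P hu]
  rw [star_mul_self, normSq_smul, map_pow, hu_normSq, one_pow, mul_one]
  rfl

lemma norm_pureQ (x : Fin 3 → ℝ) :
    ‖pureQ x‖ = ‖(WithLp.toLp 2 x : EuclideanSpace ℝ (Fin 3))‖ := by
  rw [← sq_eq_sq₀ (norm_nonneg _) (norm_nonneg _), sq, ← normSq_eq_norm_mul_self, normSq_def',
    EuclideanSpace.norm_sq_eq]
  simp [pureQ, Fin.sum_univ_three]

-- `gaussExpect p = E[p(Z)]` for a standard normal `Z`, defined through the moments
-- `gaussMoment m = E[Zᵐ]`; `integral_Ioi_exp_neg_sq_div_two_mul_eval_add_eval_neg` links it to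
-- the integral.
noncomputable def gaussMoment : ℕ → ℝ
  | 0 => 1
  | 1 => 0
  | m + 2 => (m + 1) * gaussMoment m

lemma gaussMoment_two_mul_add_one (k : ℕ) : gaussMoment (2 * k + 1) = 0 := by
  induction k with
  | zero => rfl
  | succ k ih => rw [show 2 * (k + 1) + 1 = 2 * k + 1 + 2 by ring, gaussMoment, ih, mul_zero]

noncomputable def gaussExpect : ℝ[X] →ₗ[ℝ] ℝ :=
  lsum fun m => LinearMap.mulRight ℝ (gaussMoment m)

lemma gaussExpect_monomial (m : ℕ) (a : ℝ) : gaussExpect (monomial m a) = a * gaussMoment m := by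
  simp [gaussExpect]

lemma gaussExpect_C (a : ℝ) : gaussExpect (C a) = a := by
  rw [← monomial_zero_left, gaussExpect_monomial, gaussMoment, mul_one]

lemma gaussExpect_X_mul (p : ℝ[X]) : gaussExpect (X * p) = gaussExpect (derivative p) := by
  induction p using Polynomial.induction_on' with
  | add p q hp hq => rw [mul_add, map_add, map_add, hp, hq, map_add]
  | monomial m a =>
    rw [X_mul_monomial, derivative_monomial, gaussExpect_monomial, gaussExpect_monomial]
    cases m with
    | zero => simp [gaussMoment]
    | succ m => rw [gaussMoment]; push_cast; ring

lemma integrableOn_pow_mul_exp_neg_sq_div_two (m : ℕ) :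
    IntegrableOn (fun r : ℝ => r ^ m * exp (-r ^ 2 / 2)) (Ioi 0) := by
  have h := integrableOn_rpow_mul_exp_neg_mul_sq (b := 1 / 2) (by norm_num)
    (s := m) (by linarith [(m.cast_nonneg : (0 : ℝ) ≤ m)])
  refine h.congr_fun (fun r _ => ?_) measurableSet_Ioi
  simp only [Real.rpow_natCast]; ring_nf

lemma integral_Ioi_pow_mul_exp_neg_sq_div_two (m : ℕ) :
    ∫ r in Ioi (0 : ℝ), r ^ m * exp (-r ^ 2 / 2)
      = (1 / 2 : ℝ) ^ (-((m : ℝ) + 1) / 2) * (1 / 2) * Gamma (((m : ℝ) + 1) / 2) := by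
  rw [← integral_rpow_mul_exp_neg_mul_rpow two_pos (by linarith [(m.cast_nonneg : (0 : ℝ) ≤ m)])
    (by norm_num : (0 : ℝ) < 1 / 2)]
  refine setIntegral_congr_fun measurableSet_Ioi (fun r _ => ?_)
  rw [Real.rpow_natCast, Real.rpow_two]; ring_nf

lemma integral_Ioi_pow_add_two_mul_exp_neg_sq_div_two (m : ℕ) :
    ∫ r in Ioi (0 : ℝ), r ^ (m + 2) * exp (-r ^ 2 / 2)
      = (m + 1) * ∫ r in Ioi (0 : ℝ), r ^ m * exp (-r ^ 2 / 2) := by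
  rw [integral_Ioi_pow_mul_exp_neg_sq_div_two, integral_Ioi_pow_mul_exp_neg_sq_div_two,
    show ((m + 2 : ℕ) + 1 : ℝ) / 2 = ((m : ℝ) + 1) / 2 + 1 by push_cast; ring,
    Real.Gamma_add_one (by positivity),
    show -((m + 2 : ℕ) + 1 : ℝ) / 2 = -((m : ℝ) + 1) / 2 + (-1) by push_cast; ring,
    Real.rpow_add (by norm_num), Real.rpow_neg_one]
  ring

lemma two_mul_integral_Ioi_pow_two_mul_mul_exp_neg_sq_div_two (k : ℕ) :
    2 * ∫ r in Ioi (0 : ℝ), r ^ (2 * k) * exp (-r ^ 2 / 2) = √(2 * π) * gaussMoment (2 * k) := by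
  induction k with
  | zero =>
    have h := integral_gaussian_Ioi (1 / 2)
    simp only [mul_zero, pow_zero, one_mul, gaussMoment, mul_one]
    rw [show (fun r : ℝ => exp (-r ^ 2 / 2)) = fun r => exp (-(1 / 2) * r ^ 2) by ext; ring_nf, h,
      show π / (1 / 2) = 2 * π by ring]
    ring
  | succ k ih =>
    rw [show 2 * (k + 1) = 2 * k + 2 by ring, integral_Ioi_pow_add_two_mul_exp_neg_sq_div_two,
      gaussMoment]
    linear_combination ((2 * k : ℕ) + 1 : ℝ) * ih

lemma integrableOn_exp_neg_sq_div_two_mul_eval (p : ℝ[X]) :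
    IntegrableOn (fun r => exp (-r ^ 2 / 2) * p.eval r) (Ioi 0) := by
  induction p using Polynomial.induction_on' with
  | add p q hp hq =>
    exact (hp.add hq).congr_fun (fun r _ => by simp only [Pi.add_apply, eval_add]; ring)
      measurableSet_Ioi
  | monomial m a =>
    exact IntegrableOn.congr_fun ((integrableOn_pow_mul_exp_neg_sq_div_two m).const_mul a)
      (fun r _ => by simp only [eval_monomial]; ring) measurableSet_Ioi

lemma integral_Ioi_exp_neg_sq_div_two_mul_eval_add_eval_neg (p : ℝ[X]) :
    ∫ r in Ioi (0 : ℝ), exp (-r ^ 2 / 2) * (p.eval r + p.eval (-r))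
      = √(2 * π) * gaussExpect p := by
  induction p using Polynomial.induction_on' with
  | add p q hp hq =>
    have hint : ∀ s : ℝ[X], IntegrableOn (fun r => exp (-r ^ 2 / 2) * (s.eval r + s.eval (-r)))
        (Ioi 0) := fun s => by
      simpa only [eval_add, eval_comp, eval_neg, eval_X, mul_add] using
        integrableOn_exp_neg_sq_div_two_mul_eval (s + s.comp (-X))
    rw [map_add, mul_add, ← hp, ← hq, ← integral_add (hint p) (hint q)]
    congr 1 with r
    simp only [eval_add]
    ring
  | monomial m a =>
    simp only [eval_monomial, gaussExpect_monomial]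
    obtain ⟨k, rfl | rfl⟩ := Nat.even_or_odd' m
    · have h := two_mul_integral_Ioi_pow_two_mul_mul_exp_neg_sq_div_two k
      rw [← integral_const_mul] at h
      rw [show √(2 * π) * (a * gaussMoment (2 * k)) = a * (√(2 * π) * gaussMoment (2 * k)) by ring,
        ← h, ← integral_const_mul]
      congr 1 with r
      rw [(even_two_mul k).neg_pow]
      ring
    · rw [gaussMoment_two_mul_add_one, mul_zero, mul_zero]
      simp [(odd_two_mul_add_one k).neg_pow]

lemma gaussDens_eq (x : Fin 3 → ℝ) :
    gaussDens x = (2 * π) ^ (-(3 : ℝ) / 2)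
      * exp (-‖(WithLp.toLp 2 x : EuclideanSpace ℝ (Fin 3))‖ ^ 2 / 2) := by
  simp [gaussDens, EuclideanSpace.norm_sq_eq, Fin.sum_univ_three]

lemma integral_gaussDens_mul_radial (g : ℝ → ℝ) :
    ∫ x, gaussDens x * g ‖(WithLp.toLp 2 x : EuclideanSpace ℝ (Fin 3))‖
      = (2 * π) ^ (-(3 : ℝ) / 2) * (4 * π)
          * ∫ r in Ioi (0 : ℝ), exp (-r ^ 2 / 2) * (r ^ 2 * g r) := by
  let F : ℝ → ℝ := fun r => (2 * π) ^ (-(3 : ℝ) / 2) * (exp (-r ^ 2 / 2) * g r)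
  calc ∫ x, gaussDens x * g ‖(WithLp.toLp 2 x : EuclideanSpace ℝ (Fin 3))‖
      = ∫ y : EuclideanSpace ℝ (Fin 3), F ‖y‖ := by
        rw [← (PiLp.volume_preserving_toLp (Fin 3)).integral_comp
          (MeasurableEquiv.toLp 2 _).measurableEmbedding]
        congr 1 with x
        simp only [F, gaussDens_eq]
        ring
    _ = _ := by
        have hF : ∀ r : ℝ, r ^ (3 - 1) • F r
            = (2 * π) ^ (-(3 : ℝ) / 2) * (exp (-r ^ 2 / 2) * (r ^ 2 * g r)) := fun r => by
          simp only [F, smul_eq_mul]; ring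
        simp_rw [integral_fun_norm_addHaar, finrank_euclideanSpace_fin, measureReal_def,
          EuclideanSpace.volume_ball_fin_three, hF, integral_const_mul]
        rw [ENNReal.ofReal_one, one_pow, one_mul, ENNReal.toReal_ofReal (by positivity)]
        simp only [nsmul_eq_mul, smul_eq_mul]
        ring

lemma integral_gaussDens_mul_eval_norm {p : ℝ[X]} (hp : ∀ r, p.eval (-r) = p.eval r) :
    ∫ x, gaussDens x * p.eval ‖(WithLp.toLp 2 x : EuclideanSpace ℝ (Fin 3))‖
      = gaussExpect (X ^ 2 * p) := by
  have hsym := integral_Ioi_exp_neg_sq_div_two_mul_eval_add_eval_neg (X ^ 2 * p)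
  simp only [eval_mul, eval_pow, eval_X, neg_sq, hp, ← two_mul, mul_left_comm _ (2 : ℝ),
    integral_const_mul] at hsym
  have hc : (2 * π) ^ (-(3 : ℝ) / 2) * (4 * π) * √(2 * π) = 2 := by
    rw [show -(3 : ℝ) / 2 = -1 + -(1 / 2) by norm_num, Real.rpow_add (by positivity),
      Real.rpow_neg_one, Real.rpow_neg (by positivity), ← Real.sqrt_eq_rpow]
    field_simp
    ring
  rw [integral_gaussDens_mul_radial (fun r => p.eval r)]
  refine mul_left_cancel₀ (Real.sqrt_ne_zero'.mpr (by positivity) : √(2 * π) ≠ 0) ?_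
  linear_combination (∫ r in Ioi (0 : ℝ), exp (-r ^ 2 / 2) * (r ^ 2 * p.eval r)) * hc + hsym

noncomputable def hermiteR (n : ℕ) : ℝ[X] := (hermite n).map (Int.castRingHom ℝ)

lemma hermiteR_succ (n : ℕ) : hermiteR (n + 1) = X * hermiteR n - derivative (hermiteR n) := by
  simp [hermiteR, hermite_succ, derivative_map]

lemma derivative_hermiteR_succ (n : ℕ) :
    derivative (hermiteR (n + 1)) = ((n : ℝ[X]) + 1) * hermiteR n := by
  induction n with
  | zero => simp [hermiteR]
  | succ n ih =>
    rw [hermiteR_succ (n + 1), derivative_sub, derivative_mul, derivative_X, ih, derivative_mul,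
      hermiteR_succ n]
    simp only [derivative_add, derivative_natCast, derivative_one]
    push_cast
    ring

lemma hermiteR_add_two (n : ℕ) :
    hermiteR (n + 2) = X * hermiteR (n + 1) - ((n : ℝ[X]) + 1) * hermiteR n := by
  rw [hermiteR_succ (n + 1), derivative_hermiteR_succ]

lemma gaussExpect_hermiteR_mul (n : ℕ) (q : ℝ[X]) :
    gaussExpect (hermiteR n * q) = gaussExpect (derivative^[n] q) := by
  induction n generalizing q with
  | zero => simp [hermiteR]
  | succ n ih =>
    have h : hermiteR (n + 1) * q
        = X * (hermiteR n * q) - (derivative (hermiteR n * q) - hermiteR n * derivative q) := by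
      rw [hermiteR_succ, derivative_mul]; ring
    rw [h, map_sub, map_sub, gaussExpect_X_mul, sub_sub_cancel, ih, Function.iterate_succ_apply]

lemma gaussExpect_hermiteR_mul_of_natDegree_le {n : ℕ} {q : ℝ[X]} (hq : q.natDegree ≤ n) :
    gaussExpect (hermiteR n * q) = n.factorial * q.coeff n := by
  have hconst : derivative^[n] q = C (n.factorial * q.coeff n) := by
    rw [eq_C_of_natDegree_eq_zero (Nat.eq_zero_of_le_zero
      ((natDegree_iterate_derivative q n).trans (by omega))), coeff_iterate_derivative]
    simp [Nat.descFactorial_self]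
  rw [gaussExpect_hermiteR_mul, hconst, gaussExpect_C]

lemma natDegree_Q_le : ∀ n, (Q n).natDegree ≤ n
  | 0 => by simp [Q]
  | 1 => by simp [Q]
  | n + 2 => by
    have h1 := natDegree_Q_le (n + 1)
    have h0 := natDegree_Q_le n
    refine (natDegree_sub_le _ _).trans (max_le ?_ ?_)
    · exact natDegree_mul_le.trans (by rw [natDegree_X]; omega)
    · exact (natDegree_C_mul_le _ _).trans (by omega)

lemma coeff_Q_self : ∀ n, (Q n).coeff n = 1
  | 0 => by simp [Q]
  | 1 => by simp [Q]
  | n + 2 => by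
    rw [Q, coeff_sub, coeff_X_mul, coeff_Q_self (n + 1), coeff_C_mul,
      coeff_eq_zero_of_natDegree_lt (by have := natDegree_Q_le n; omega), mul_zero, sub_zero]

lemma C_β_two_mul_add_one (k : ℕ) : C (β (2 * k + 1)) = 2 * (k : ℝ[X]) + 3 := by
  rw [β, if_pos (odd_two_mul_add_one k)]
  simp only [map_add, map_natCast, map_ofNat]
  push_cast
  ring

lemma C_β_two_mul_add_two (k : ℕ) : C (β (2 * k + 2)) = 2 * (k : ℝ[X]) + 2 := by
  rw [β, if_neg (by rw [Nat.not_odd_iff_even]; exact ⟨k + 1, by ring⟩)]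
  simp only [map_natCast]
  push_cast
  ring

lemma X_mul_Q_two_mul_and_X_sq_mul_Q_two_mul_add_one (k : ℕ) :
    X * Q (2 * k) = hermiteR (2 * k + 1) ∧
      X ^ 2 * Q (2 * k + 1)
        = hermiteR (2 * k + 3) + (2 * (k : ℝ[X]) + 3) * hermiteR (2 * k + 1) := by
  induction k with
  | zero =>
    simp only [hermiteR_add_two, hermiteR_succ 0]
    simp [Q, hermiteR]
    ring
  | succ k ih =>
    obtain ⟨ih₁, ih₂⟩ := ih
    rw [show 2 * (k + 1) = 2 * k + 2 by ring]
    have hQ₂ : Q (2 * k + 2) = X * Q (2 * k + 1) - (2 * (k : ℝ[X]) + 3) * Q (2 * k) := by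
      rw [← C_β_two_mul_add_one]; rfl
    have hQ₃ : Q (2 * k + 3) = X * Q (2 * k + 2) - (2 * (k : ℝ[X]) + 2) * Q (2 * k + 1) := by
      rw [← C_β_two_mul_add_two]; rfl
    have e₁ : X * Q (2 * k + 2) = hermiteR (2 * k + 3) := by
      rw [hQ₂]; linear_combination ih₂ - (2 * (k : ℝ[X]) + 3) * ih₁
    refine ⟨e₁, ?_⟩
    have h₃ : hermiteR (2 * k + 3)
        = X * hermiteR (2 * k + 2) - (2 * (k : ℝ[X]) + 2) * hermiteR (2 * k + 1) := by
      rw [hermiteR_add_two]; push_cast; ring_nf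
    have h₄ : hermiteR (2 * k + 4)
        = X * hermiteR (2 * k + 3) - (2 * (k : ℝ[X]) + 3) * hermiteR (2 * k + 2) := by
      rw [hermiteR_add_two]; push_cast; ring_nf
    have h₅ : hermiteR (2 * k + 5)
        = X * hermiteR (2 * k + 4) - (2 * (k : ℝ[X]) + 4) * hermiteR (2 * k + 3) := by
      rw [hermiteR_add_two]; push_cast; ring_nf
    rw [show 2 * k + 2 + 1 = 2 * k + 3 by ring, show 2 * k + 2 + 3 = 2 * k + 5 by ring, hQ₃]
    push_cast
    linear_combination
      X ^ 2 * e₁ - (2 * (k : ℝ[X]) + 2) * ih₂ - h₅ - X * h₄ - (2 * (k : ℝ[X]) + 3) * h₃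

lemma gaussExpect_X_sq_mul_Q_sq (n : ℕ) :
    gaussExpect (X ^ 2 * Q n ^ 2)
      = if Odd n then (n.factorial : ℝ) * (n + 2) else ((n + 1).factorial : ℝ) := by
  obtain ⟨k, rfl | rfl⟩ := Nat.even_or_odd' n
  · obtain ⟨hX, -⟩ := X_mul_Q_two_mul_and_X_sq_mul_Q_two_mul_add_one k
    have hdeg : (X * Q (2 * k)).natDegree ≤ 2 * k + 1 :=
      natDegree_mul_le.trans (by rw [natDegree_X]; have := natDegree_Q_le (2 * k); omega)
    rw [if_neg (Nat.not_odd_iff_even.mpr (even_two_mul k)),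
      show X ^ 2 * Q (2 * k) ^ 2 = hermiteR (2 * k + 1) * (X * Q (2 * k)) by rw [← hX]; ring,
      gaussExpect_hermiteR_mul_of_natDegree_le hdeg, coeff_X_mul, coeff_Q_self, mul_one]
  · obtain ⟨-, hX⟩ := X_mul_Q_two_mul_and_X_sq_mul_Q_two_mul_add_one k
    have hdeg := natDegree_Q_le (2 * k + 1)
    rw [if_pos (odd_two_mul_add_one k),
      show X ^ 2 * Q (2 * k + 1) ^ 2 = hermiteR (2 * k + 3) * Q (2 * k + 1)
        + (2 * k + 3 : ℝ) • (hermiteR (2 * k + 1) * Q (2 * k + 1)) by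
          rw [sq (Q _), ← mul_assoc, hX, Algebra.smul_def]
          simp only [map_add, map_mul, map_natCast, map_ofNat]; ring,
      map_add, map_smul, gaussExpect_hermiteR_mul_of_natDegree_le (hdeg.trans (by omega)),
      gaussExpect_hermiteR_mul_of_natDegree_le hdeg, coeff_Q_self,
      coeff_eq_zero_of_natDegree_lt (by omega)]
    push_cast [Nat.factorial_succ]
    ring

theorem stmt6 (n : ℕ) :
    (∫ x : Fin 3 → ℝ,
        gaussDens x • (star (aeval (pureQ x) (P n)) * aeval (pureQ x) (P n)))
      = algebraMap ℝ ℍ[ℝ]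
          (if Odd n then (n.factorial : ℝ) * (n + 2) else ((n + 1).factorial : ℝ)) := by
  have hpt : ∀ x, gaussDens x • (star (aeval (pureQ x) (P n)) * aeval (pureQ x) (P n))
      = (gaussDens x * (Q n ^ 2).eval ‖(WithLp.toLp 2 x : EuclideanSpace ℝ (Fin 3))‖)
          • (1 : ℍ[ℝ]) :=
    fun x => by
      rw [star_mul_self_aeval_P rfl, norm_pureQ, Algebra.algebraMap_eq_smul_one, smul_smul,
        eval_pow]
  have heven : ∀ r, (Q n ^ 2).eval (-r) = (Q n ^ 2).eval r := fun r => by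
    rw [eval_pow, eval_pow, eval_neg_Q, mul_pow, ← pow_mul, pow_mul', neg_one_sq, one_pow, one_mul]
  rw [integral_congr_ae (.of_forall hpt), integral_smul_const,
    integral_gaussDens_mul_eval_norm heven, gaussExpect_X_sq_mul_Q_sq,
    Algebra.algebraMap_eq_smul_one]
end

section
/- Let A, B, C be quaternions with AB ≠ 0 and suppose A and -B are not equivalent (i.e., it is not the case that |A| = |B| and Re(A) = -Re(B)). Then the Sylvester equation A z + z B = C has the unique solution z = f_l^{-1}(C + A^{-1} C conj(B)), where f_l = 2 Re(B) + A + |B|² A^{-1}. -/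
/-!
The map `L z = A z + z B` is related to the left multiplication by
`f = 2 Re B + A + |B|² A⁻¹` through `M (L z) = f z`, where `M w = w + A⁻¹ w B̄`, because
`z B + z B̄ = 2 Re B z` and `B B̄ = |B|²`. A nonzero solution of `A u + u B = 0` would make
`A = -u B u⁻¹`, which has the norm of `B` and real part `-Re B`; so under the hypothesis both
`L` and `M` (for which `A (M u) = A u + u B̄`) have trivial kernel. Hence `f ≠ 0`
(otherwise `M (L 1) = 0`), and `L z = C ↔ M (L z) = M C ↔ f z = M C`.
-/

open Quaternion

namespace Quaternion

theorem re_mul_comm (a b : ℍ[ℝ]) : (a * b).re = (b * a).re := by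
  simp only [re_mul]; ring

theorem norm_eq_and_re_eq_neg_of_mul_add_mul_eq_zero {A B u : ℍ[ℝ]} (hu : u ≠ 0)
    (h : A * u + u * B = 0) : ‖A‖ = ‖B‖ ∧ A.re = -B.re := by
  have hAu : A * u = -(u * B) := eq_neg_of_add_eq_zero_left h
  constructor
  · have := congrArg norm hAu
    rw [norm_mul, norm_neg, norm_mul, mul_comm ‖u‖] at this
    exact mul_right_cancel₀ (norm_ne_zero_iff.mpr hu) this
  · have hA : A = -(u * B * u⁻¹) := by rw [← neg_mul, ← hAu, mul_inv_cancel_right₀ hu]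
    rw [hA, re_neg, mul_assoc, re_mul_comm, inv_mul_cancel_right₀ hu]

theorem eq_zero_of_mul_add_mul_eq_zero {A B u : ℍ[ℝ]} (hne : ¬(‖A‖ = ‖B‖ ∧ A.re = -B.re))
    (h : A * u + u * B = 0) : u = 0 := by
  by_contra hu
  exact hne (norm_eq_and_re_eq_neg_of_mul_add_mul_eq_zero hu h)

theorem injective_add_inv_mul_mul_star {A B : ℍ[ℝ]} (hA : A ≠ 0)
    (hne : ¬(‖A‖ = ‖B‖ ∧ A.re = -B.re)) :
    Function.Injective fun w => w + A⁻¹ * w * star B := by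
  intro x y (hxy : x + A⁻¹ * x * star B = y + A⁻¹ * y * star B)
  have hne' : ¬(‖A‖ = ‖star B‖ ∧ A.re = -(star B).re) := by rwa [norm_star, re_star]
  have hA_mul : ∀ w, A * (w + A⁻¹ * w * star B) = A * w + w * star B := fun w => by
    rw [mul_add, ← mul_assoc, mul_inv_cancel_left₀ hA]
  refine sub_eq_zero.mp (eq_zero_of_mul_add_mul_eq_zero hne' ?_)
  rw [mul_sub, sub_mul, sub_add_sub_comm, ← hA_mul, ← hA_mul, hxy, sub_self]

theorem sylvester_coeff_mul_eq {A : ℍ[ℝ]} (hA : A ≠ 0) (B z : ℍ[ℝ]) :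
    (algebraMap ℝ ℍ[ℝ] (2 * B.re) + A + ‖B‖ ^ 2 • A⁻¹) * z
      = (A * z + z * B) + A⁻¹ * (A * z + z * B) * star B := by
  have hBB : B * star B = algebraMap ℝ ℍ[ℝ] (‖B‖ ^ 2) := by
    rw [self_mul_star, normSq_eq_norm_mul_self, sq]; rfl
  have hre : z * B + z * star B = (2 * B.re) • z := by
    rw [← mul_add, self_add_star', mul_coe_eq_smul]
  calc _ = (2 * B.re) • z + A * z + ‖B‖ ^ 2 • (A⁻¹ * z) := by
        rw [add_mul, add_mul, smul_mul_assoc, ← Algebra.smul_def]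
    _ = A * z + z * B + (z * star B + A⁻¹ * (z * (B * star B))) := by
        rw [← hre, hBB, ← Algebra.commutes, ← Algebra.smul_def, mul_smul_comm]; abel
    _ = _ := by
        rw [mul_add A⁻¹, inv_mul_cancel_left₀ hA, add_mul, mul_assoc, mul_assoc]

end Quaternion

theorem stmt13 (A B C : ℍ[ℝ]) (hAB : A * B ≠ 0)
    (hne : ¬(‖A‖ = ‖B‖ ∧ A.re = -B.re)) :
    ∀ z : ℍ[ℝ], A * z + z * B = C ↔
      z = (algebraMap ℝ ℍ[ℝ] (2 * B.re) + A + ‖B‖ ^ 2 • A⁻¹)⁻¹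
            * (C + A⁻¹ * C * star B) := by
  have hA : A ≠ 0 := left_ne_zero_of_mul hAB
  set f := algebraMap ℝ ℍ[ℝ] (2 * B.re) + A + ‖B‖ ^ 2 • A⁻¹
  let M : ℍ[ℝ] → ℍ[ℝ] := fun w => w + A⁻¹ * w * star B
  have hM : Function.Injective M := injective_add_inv_mul_mul_star hA hne
  have hf : f ≠ 0 := by
    intro hf
    have h1 : M (A * 1 + 1 * B) = M 0 := by
      simp only [M, ← sylvester_coeff_mul_eq hA, zero_mul, mul_zero, add_zero]
      exact mul_eq_zero_of_left hf 1
    exact one_ne_zero (eq_zero_of_mul_add_mul_eq_zero hne (hM h1))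
  intro z
  calc A * z + z * B = C ↔ M (A * z + z * B) = M C := hM.eq_iff.symm
    _ ↔ f * z = M C := by rw [sylvester_coeff_mul_eq hA]
    _ ↔ z = f⁻¹ * M C := by rw [eq_inv_mul_iff_mul_eq₀ hf]
end

section
/- Let x, y be nonzero pure quaternions with |x| ≠ |y|, and let C be any quaternion. Then the unique solution of the equation x z + z conj(y) = C is z = (x/(x² − y²))(C + x^{-1} C y) = (x C + C y)/(x² − y²). -/
open Quaternion

theorem stmt14 (x y : ℍ[ℝ]) (hx : x.re = 0) (hy : y.re = 0)
    (hx0 : x ≠ 0) (hy0 : y ≠ 0) (hxy : ‖x‖ ≠ ‖y‖) (C : ℍ[ℝ]) :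
    (∀ z : ℍ[ℝ], x * z + z * star y = C ↔
      z = (x ^ 2 - y ^ 2)⁻¹ * (x * C + C * y)) ∧
    x * (x ^ 2 - y ^ 2)⁻¹ * (C + x⁻¹ * C * y)
      = (x ^ 2 - y ^ 2)⁻¹ * (x * C + C * y) := by
  have hsx : star x = -x := Quaternion.star_eq_neg.mpr hx
  have hsy : star y = -y := Quaternion.star_eq_neg.mpr hy
  have hx2 : x ^ 2 = -((normSq x : ℝ) : ℍ[ℝ]) := by
    rw [← Quaternion.self_mul_star x, hsx, mul_neg, neg_neg, sq]
  have hy2 : y ^ 2 = -((normSq y : ℝ) : ℍ[ℝ]) := by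
    rw [← Quaternion.self_mul_star y, hsy, mul_neg, neg_neg, sq]
  set r : ℝ := normSq y - normSq x with hr
  have ha : x ^ 2 - y ^ 2 = ((r : ℝ) : ℍ[ℝ]) := by
    rw [hx2, hy2, hr, Quaternion.coe_sub]; abel
  have hr0 : r ≠ 0 := by
    intro h
    apply hxy
    have hnn : normSq y = normSq x := by
      have := sub_eq_zero.mp h; linarith
    have h2 : ‖x‖ * ‖x‖ = ‖y‖ * ‖y‖ := by
      rw [← Quaternion.normSq_eq_norm_mul_self, ← Quaternion.normSq_eq_norm_mul_self, hnn]
    rcases mul_self_eq_mul_self_iff.mp h2 with h3 | h3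
    · exact h3
    · have := norm_nonneg y
      have : (0:ℝ) < ‖x‖ := norm_pos_iff.mpr hx0
      linarith [norm_nonneg y]
  have hainv : (x ^ 2 - y ^ 2)⁻¹ = (((r)⁻¹ : ℝ) : ℍ[ℝ]) := by
    rw [ha, ← Quaternion.coe_inv]
  set c : ℍ[ℝ] := ((r⁻¹ : ℝ) : ℍ[ℝ]) with hc
  have c1 : x * c = c * x := (Quaternion.coe_commutes _ x).symm
  have hczC : C * ((normSq y : ℝ) : ℍ[ℝ]) = ((normSq y : ℝ) : ℍ[ℝ]) * C :=
    (Quaternion.coe_commutes _ C).symm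
  constructor
  · intro z
    constructor
    · intro h
      have hzy : z * y ^ 2 = y ^ 2 * z := by
        rw [hy2, mul_neg, neg_mul, Quaternion.coe_commutes]
      have key : ((r : ℝ) : ℍ[ℝ]) * z = x * C + C * y := by
        rw [← h, hsy]
        have expand : x * (x * z + z * -y) + (x * z + z * -y) * y
            = x ^ 2 * z - z * y ^ 2 := by noncomm_ring
        rw [expand, hzy, ← sub_mul, ha]
      rw [hainv, ← key, ← mul_assoc, hc, ← Quaternion.coe_mul,
        inv_mul_cancel₀ hr0]
      simp
    · intro h
      rw [h, hsy, hainv]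
      calc x * (c * (x * C + C * y)) + c * (x * C + C * y) * -y
          = (x * c) * (x * C + C * y) + c * ((x * C + C * y) * -y) := by
            rw [mul_assoc, mul_assoc]
        _ = c * (x * (x * C + C * y) + (x * C + C * y) * -y) := by
            rw [c1, mul_assoc c x, mul_add c]
        _ = c * (x ^ 2 * C - C * y ^ 2) := by congr 1; noncomm_ring
        _ = c * (((r : ℝ) : ℍ[ℝ]) * C) := by
            congr 1
            rw [hx2, hy2, neg_mul, mul_neg, sub_neg_eq_add, hczC, ← neg_mul,
              ← add_mul]
            congr 1
            rw [hr, Quaternion.coe_sub]; abel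
        _ = C := by
            rw [← mul_assoc, hc, ← Quaternion.coe_mul, inv_mul_cancel₀ hr0]
            simp
  · rw [hainv, c1, mul_assoc]
    congr 1
    rw [mul_add, ← mul_assoc, ← mul_assoc, mul_inv_cancel₀ hx0, one_mul]
end
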